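/- arXiv:2411.18844 — 5 statements merged into one kernel-verified Lean document; each statement's English description precedes it below -/
import Mathlib

section
/- Singleton bound: Let C be a linear code of length ℓ over a finite field F with dimension k = finrank F C ≥ 1 and minimum distance d. Then d ≤ ℓ − k + 1. -/
/-- Singleton bound: a linear code of length `ℓ`, dimension `k ≥ 1` and minimum
distance `d` over a finite field satisfies `d ≤ ℓ - k + 1`. -/
theorem singleton_bound
    {F : Type*} [Field F] [Fintype F] [DecidableEq F] {ℓ k d : ℕ}
    (C : Submodule F (Fin ℓ → F))
    (hk : Module.finrank F C = k) (hk1 : 1 ≤ k)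
    (hd : IsLeast {w : ℕ | ∃ c ∈ C, c ≠ 0 ∧ hammingNorm c = w} d) :
    d ≤ ℓ - k + 1 := by
  obtain ⟨⟨c₀, hc₀C, hc₀ne, hc₀w⟩, hlb⟩ := hd
  have hd1 : 1 ≤ d := hc₀w ▸ hammingNorm_pos_iff.mpr hc₀ne
  have hdℓ : d ≤ ℓ := by
    have := hammingNorm_le_card_fintype (x := c₀)
    simpa [hc₀w] using this
  set m := ℓ - (d - 1) with hm
  have hmℓ : m ≤ ℓ := Nat.sub_le _ _
  -- projection onto the first m coordinates
  let f : C →ₗ[F] (Fin m → F) :=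
    (LinearMap.funLeft F F (Fin.castLE hmℓ)).comp C.subtype
  have hinj : Function.Injective f := by
    rw [← LinearMap.ker_eq_bot, LinearMap.ker_eq_bot']
    intro ⟨c, hcC⟩ hfc
    ext1
    simp only [Submodule.mk_eq_zero]
    by_contra hne
    have hzero : ∀ i : Fin ℓ, (i : ℕ) < m → c i = 0 := by
      intro i hi
      have := congrFun hfc ⟨i, hi⟩
      simpa [f, LinearMap.funLeft] using this
    have hsub : ({i | c i ≠ 0} : Finset (Fin ℓ)) ⊆
        Finset.univ.filter (fun i : Fin ℓ => ¬ (i : ℕ) < m) := by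
      intro i hi
      simp only [Finset.mem_filter, Finset.mem_univ, true_and]
      intro hlt
      have hne' : c i ≠ 0 := by simpa using hi
      exact hne' (hzero i hlt)
    have hcardm : (Finset.univ.filter (fun i : Fin ℓ => (i : ℕ) < m)).card = m := by
      have : (Finset.univ.filter (fun i : Fin ℓ => (i : ℕ) < m)) =
          (Finset.range m).attachFin
            (fun x hx => lt_of_lt_of_le (Finset.mem_range.mp hx) hmℓ) := by
        ext i; simp
      rw [this, Finset.card_attachFin, Finset.card_range]
    have hsplit := Finset.card_filter_add_card_filter_not
      (s := (Finset.univ : Finset (Fin ℓ))) (p := fun i : Fin ℓ => (i : ℕ) < m)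
    have hnorm : hammingNorm c ≤ ℓ - m := by
      have := Finset.card_le_card hsub
      simp only [Finset.card_univ, Fintype.card_fin] at hsplit
      calc hammingNorm c ≤ _ := this
        _ ≤ ℓ - m := by omega
    have hge : d ≤ hammingNorm c := hlb ⟨c, hcC, hne, rfl⟩
    omega
  have hle : k ≤ m := by
    rw [← hk]
    have := LinearMap.finrank_le_finrank_of_injective hinj
    simpa using this
  omega
end

section
/- Existence of Reed–Solomon MDS codes (Theorem 5.1(1)): let F be a finite field with q elements and let k be a natural number with 1 ≤ k ≤ q − 1. Then there exists a linear code C over F of length ℓ = q − 1 and dimension k (finrank F C = k) whose minimum distance equals ℓ − k + 1 = q − k; that is, C is an MDS code meeting the Singleton bound with equality. -/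
open Polynomial Finset

/-- Existence of Reed–Solomon MDS codes: over a finite field `F` with `q` elements,
for every `1 ≤ k ≤ q - 1` there is a linear code of length `q - 1`, dimension `k`
and minimum distance exactly `(q - 1) - k + 1 = q - k`, meeting the Singleton bound. -/
theorem exists_reed_solomon_mds_code
    {F : Type*} [Field F] [Fintype F] [DecidableEq F] (q k : ℕ)
    (hq : Fintype.card F = q) (hk1 : 1 ≤ k) (hk2 : k ≤ q - 1) :
    ∃ C : Submodule F (Fin (q - 1) → F),
      Module.finrank F C = k ∧
      IsLeast {w : ℕ | ∃ c ∈ C, c ≠ 0 ∧ hammingNorm c = w} ((q - 1) - k + 1) := by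
  classical
  have hq2 : 2 ≤ q := by
    rw [← hq]; exact Fintype.one_lt_card
  have hcard : Fintype.card {x : F // x ≠ 0} = q - 1 := by
    rw [Fintype.card_subtype_compl, Fintype.card_subtype_eq (0 : F), hq]
  let e : Fin (q - 1) ≃ {x : F // x ≠ 0} :=
    (Fintype.equivFinOfCardEq hcard).symm
  have einj : Function.Injective (fun i : Fin (q-1) => (e i : F)) := by
    intro a b hab
    exact e.injective (Subtype.ext hab)
  let φ : F[X] →ₗ[F] (Fin (q - 1) → F) :=
    { toFun := fun f i => f.eval (e i : F)
      map_add' := by intro f g; funext i; simp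
      map_smul' := by intro c f; funext i; simp }
  have φapply : ∀ (f : F[X]) (i : Fin (q-1)), φ f i = f.eval (e i : F) := fun _ _ => rfl
  have hinj : ∀ f ∈ degreeLT F k, φ f = 0 → f = 0 := by
    intro f hf hf0
    by_cases h0 : f = 0
    · exact h0
    · refine eq_zero_of_natDegree_lt_card_of_eval_eq_zero f einj (fun i => ?_) ?_
      · have := congrFun hf0 i; simpa [φapply] using this
      · rw [Fintype.card_fin]
        exact lt_of_lt_of_le ((natDegree_lt_iff_degree_lt h0).2 (mem_degreeLT.1 hf)) hk2
  refine ⟨(degreeLT F k).map φ, ?_, ?_, ?_⟩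
  · -- dimension
    have hr : (degreeLT F k).map φ = LinearMap.range (φ ∘ₗ (degreeLT F k).subtype) := by
      rw [LinearMap.range_comp, Submodule.range_subtype]
    rw [hr, LinearMap.finrank_range_of_inj, (Polynomial.degreeLTEquiv F k).finrank_eq,
      Module.finrank_pi, Fintype.card_fin]
    intro a b hab
    apply Subtype.ext
    have hmem : (↑a - ↑b : F[X]) ∈ degreeLT F k := sub_mem a.2 b.2
    have : (↑a - ↑b : F[X]) = 0 := hinj _ hmem (by
      simp only [LinearMap.comp_apply, Submodule.subtype_apply] at hab
      rw [map_sub, hab, sub_self])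
    exact sub_eq_zero.1 this
  · -- membership
    have hk1q : k - 1 ≤ q - 1 := by omega
    set g : F[X] := ∏ i : Fin (k-1), (X - C (e (Fin.castLE hk1q i) : F)) with hg
    have hgmonic : g.Monic := monic_prod_of_monic _ _ fun i _ => monic_X_sub_C _
    have hgdeg : g.natDegree = k - 1 := by
      rw [hg, natDegree_prod_of_monic _ _ fun i _ => monic_X_sub_C _]
      simp [natDegree_X_sub_C]
    have hgmem : g ∈ degreeLT F k := by
      rw [mem_degreeLT, degree_eq_natDegree hgmonic.ne_zero, hgdeg]
      exact_mod_cast by omega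
    have heval : ∀ i : Fin (q-1), (g.eval (e i : F) = 0 ↔ (i : ℕ) < k - 1) := by
      intro i
      rw [hg, eval_prod, Finset.prod_eq_zero_iff]
      constructor
      · rintro ⟨j, -, hj⟩
        simp only [eval_sub, eval_X, eval_C, sub_eq_zero] at hj
        have h1 : Fin.castLE hk1q j = i := einj hj.symm
        rw [← h1]; exact j.2
      · intro hi
        refine ⟨⟨i, hi⟩, Finset.mem_univ _, ?_⟩
        have h2 : Fin.castLE hk1q (⟨i, hi⟩ : Fin (k-1)) = i := Fin.ext rfl
        simp [h2]
    refine ⟨φ g, ⟨g, hgmem, rfl⟩, fun h => hgmonic.ne_zero (hinj g hgmem h), ?_⟩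
    have hEq : (Finset.univ.filter fun i => φ g i ≠ 0)
        = Finset.univ.filter (fun i : Fin (q-1) => ¬ ((i:ℕ) < k-1)) := by
      ext i
      simp only [mem_filter, mem_univ, true_and, φapply, ne_eq, heval i]
    have hcardlt : (Finset.univ.filter fun i : Fin (q-1) => (i:ℕ) < k-1).card = k - 1 := by
      have hmapeq : (Finset.univ.filter fun i : Fin (q-1) => (i:ℕ) < k-1)
          = Finset.map (Fin.castLEEmb hk1q) Finset.univ := by
        ext i
        simp only [mem_filter, mem_univ, true_and, mem_map, Fin.castLEEmb_apply]
        constructor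
        · intro hi; exact ⟨⟨i, hi⟩, Fin.ext rfl⟩
        · rintro ⟨j, rfl⟩; simpa using j.2
      rw [hmapeq, Finset.card_map, Finset.card_univ, Fintype.card_fin]
    show (Finset.univ.filter fun i => φ g i ≠ 0).card = (q-1) - k + 1
    rw [hEq, Finset.filter_not, Finset.card_sdiff_of_subset (Finset.filter_subset _ _), hcardlt,
      Finset.card_univ, Fintype.card_fin]
    omega
  · -- lower bound
    rintro w ⟨c, ⟨f, hf, rfl⟩, hc0, rfl⟩
    have hf0 : f ≠ 0 := fun h => hc0 (by rw [h, map_zero])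
    set Z : Finset (Fin (q-1)) := Finset.univ.filter (fun i => φ f i = 0) with hZ
    have hZcard : Z.card ≤ k - 1 := by
      have hsub : Z.image (fun i => (e i : F)) ⊆ f.roots.toFinset := by
        intro x hx
        simp only [Finset.mem_image] at hx
        obtain ⟨i, hi, rfl⟩ := hx
        rw [Multiset.mem_toFinset, mem_roots hf0]
        exact (Finset.mem_filter.1 hi).2
      have h3 := Finset.card_le_card hsub
      rw [Finset.card_image_of_injective _ einj] at h3
      calc Z.card ≤ f.roots.toFinset.card := h3
        _ ≤ Multiset.card f.roots := Multiset.toFinset_card_le _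
        _ ≤ f.natDegree := card_roots' f
        _ ≤ k - 1 := by
            have := (natDegree_lt_iff_degree_lt hf0).2 (mem_degreeLT.1 hf); omega
    have hnorm : hammingNorm (φ f) = (q - 1) - Z.card := by
      show (Finset.univ.filter fun i => φ f i ≠ 0).card = (q-1) - Z.card
      rw [show (Finset.univ.filter fun i => φ f i ≠ 0) = Zᶜ by
            ext i; simp [hZ], Finset.card_compl, Fintype.card_fin]
    omega
end

section
/- Existence of hyperoval (triply-extended Reed–Solomon) codes (Theorem 5.1(2), first family): let r ≥ 1 and let F be a finite field with q = 2^r elements. Then there exists a linear code C over F of length q + 2, dimension 3, and minimum distance exactly q; that is, C is an MDS code with parameters [2^r + 2, 3, 2^r]. -/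
open Finset Polynomial

section Hyperoval

variable {F : Type*} [Field F] [Fintype F] [DecidableEq F]

private lemma hn_eq (v : (F ⊕ Fin 2) → F) :
    hammingNorm v = Fintype.card F + 2 - #(Finset.univ.filter (fun i => v i = 0)) := by
  have h := Finset.card_filter_add_card_filter_not (s := Finset.univ)
    (p := fun i : F ⊕ Fin 2 => v i = 0)
  simp only [Finset.card_univ, Fintype.card_sum, Fintype.card_fin] at h
  have h2 : hammingNorm v = #(Finset.univ.filter (fun i => ¬ v i = 0)) := rfl
  omega

private lemma hn_comp_equiv {n : ℕ} (e : Fin n ≃ (F ⊕ Fin 2)) (v : (F ⊕ Fin 2) → F) :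
    hammingNorm (v ∘ e) = hammingNorm v := by
  unfold hammingNorm
  exact Finset.card_bij' (fun i _ => e i) (fun j _ => e.symm j)
    (by intro a ha; simpa using (by simpa using ha : v (e a) ≠ 0))
    (by intro a ha; simpa using (by simpa using ha))
    (by intro a _; simp) (by intro a _; simp)

private def W0 : (F ⊕ Fin 2) → F := Sum.elim (fun x => x ^ 2) ![1, 0]
private def W1 : (F ⊕ Fin 2) → F := Sum.elim (fun x => x) ![0, 1]
private def W2 : (F ⊕ Fin 2) → F := Sum.elim (fun _ => 1) ![0, 0]

private def phi : (Fin 3 → F) →ₗ[F] ((F ⊕ Fin 2) → F) :=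
  (LinearMap.proj 0).smulRight W0 + (LinearMap.proj 1).smulRight W1
    + (LinearMap.proj 2).smulRight W2

private lemma phi_inl (v : Fin 3 → F) (x : F) :
    phi v (Sum.inl x) = v 0 * x ^ 2 + v 1 * x + v 2 := by
  simp [phi, W0, W1, W2]

private lemma phi_inr0 (v : Fin 3 → F) : phi v (Sum.inr 0) = v 0 := by
  simp [phi, W0, W1, W2]

private lemma phi_inr1 (v : Fin 3 → F) : phi v (Sum.inr 1) = v 1 := by
  simp [phi, W0, W1, W2]

private lemma zeros_le [CharP F 2] (v : Fin 3 → F) (hv : v ≠ 0) :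
    #(Finset.univ.filter (fun i => phi v i = 0)) ≤ 2 := by
  by_cases ha : v 0 = 0 <;> by_cases hb : v 1 = 0
  · -- a = 0, b = 0, c ≠ 0
    have hc : v 2 ≠ 0 := by
      intro hc; apply hv; funext i; fin_cases i <;> simpa [ha, hb, hc]
    calc #(Finset.univ.filter (fun i => phi v i = 0))
        ≤ #({Sum.inr 0, Sum.inr 1} : Finset (F ⊕ Fin 2)) := by
          apply Finset.card_le_card
          intro i hi
          simp only [Finset.mem_filter, Finset.mem_univ, true_and] at hi
          rcases i with x | j
          · rw [phi_inl, ha, hb] at hi; simp at hi; exact absurd hi hc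
          · fin_cases j <;> simp
      _ ≤ 2 := (Finset.card_insert_le _ _).trans (by simp)
  · -- a = 0, b ≠ 0
    calc #(Finset.univ.filter (fun i => phi v i = 0))
        ≤ #({Sum.inl (-(v 2 / v 1)), Sum.inr 0} : Finset (F ⊕ Fin 2)) := by
          apply Finset.card_le_card
          intro i hi
          simp only [Finset.mem_filter, Finset.mem_univ, true_and] at hi
          rcases i with x | j
          · rw [phi_inl, ha] at hi
            have : x = -(v 2 / v 1) := by field_simp; linear_combination hi
            simp [this]
          · fin_cases j
            · simp
            · have hi' : phi v (Sum.inr 1) = 0 := hi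
              rw [phi_inr1] at hi'; exact absurd hi' hb
      _ ≤ 2 := (Finset.card_insert_le _ _).trans (by simp)
  · -- a ≠ 0, b = 0
    have hS : #(Finset.univ.filter (fun x : F => v 0 * x ^ 2 + v 2 = 0)) ≤ 1 := by
      apply Finset.card_le_one.2
      intro x hx y hy
      simp only [Finset.mem_filter, Finset.mem_univ, true_and] at hx hy
      have hxy : x ^ 2 = y ^ 2 := by
        have h' : v 0 * x ^ 2 = v 0 * y ^ 2 := by linear_combination hx - hy
        exact mul_left_cancel₀ ha h'
      have := frobenius_inj F 2
      exact this (by rwa [frobenius_def, frobenius_def])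
    calc #(Finset.univ.filter (fun i => phi v i = 0))
        ≤ #(insert ((Sum.inr 1 : F ⊕ Fin 2))
            ((Finset.univ.filter (fun x : F => v 0 * x ^ 2 + v 2 = 0)).image Sum.inl)) := by
          have hsub : (Finset.univ.filter (fun i => phi v i = 0)) ⊆ insert ((Sum.inr 1 : F ⊕ Fin 2))
              ((Finset.univ.filter (fun x : F => v 0 * x ^ 2 + v 2 = 0)).image Sum.inl) := by
            intro i hi
            simp only [Finset.mem_filter, Finset.mem_univ, true_and] at hi
            rcases i with x | j
            · rw [phi_inl, hb] at hi
              simp only [Finset.mem_insert, Finset.mem_image, Finset.mem_filter,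
                Finset.mem_univ, true_and]
              exact Or.inr ⟨x, by linear_combination hi, rfl⟩
            · fin_cases j
              · have hi' : phi v (Sum.inr 0) = 0 := hi
                rw [phi_inr0] at hi'; exact absurd hi' ha
              · simp
          exact Finset.card_le_card hsub
      _ ≤ #((Finset.univ.filter (fun x : F => v 0 * x ^ 2 + v 2 = 0)).image Sum.inl) + 1 :=
          Finset.card_insert_le _ _
      _ ≤ 1 + 1 := by
          gcongr
          exact (Finset.card_image_le).trans hS
      _ = 2 := rfl
  · -- a ≠ 0, b ≠ 0 : quadratic, at most 2 roots
    set p : Polynomial F := C (v 0) * X ^ 2 + C (v 1) * X + C (v 2) with hp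
    have hpne : p ≠ 0 := fun h => ha (by
      have := Polynomial.natDegree_quadratic ha (a := v 0) (b := v 1) (c := v 2)
      rw [← hp, h] at this; simp at this)
    calc #(Finset.univ.filter (fun i => phi v i = 0))
        ≤ #(p.roots.toFinset.image Sum.inl) := by
          apply Finset.card_le_card
          intro i hi
          simp only [Finset.mem_filter, Finset.mem_univ, true_and] at hi
          rcases i with x | j
          · simp only [Finset.mem_image, Multiset.mem_toFinset, mem_roots hpne]
            refine ⟨x, ?_, rfl⟩
            rw [phi_inl] at hi
            simp [hp, IsRoot, hi]
          · fin_cases j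
            · have hi' : phi v (Sum.inr 0) = 0 := hi
              rw [phi_inr0] at hi'; exact absurd hi' ha
            · have hi' : phi v (Sum.inr 1) = 0 := hi
              rw [phi_inr1] at hi'; exact absurd hi' hb
      _ ≤ p.roots.toFinset.card := Finset.card_image_le
      _ ≤ Multiset.card p.roots := p.roots.toFinset_card_le
      _ ≤ p.natDegree := p.card_roots'
      _ = 2 := Polynomial.natDegree_quadratic ha

private lemma hyperoval_aux [CharP F 2] :
    ∃ C : Submodule F ((F ⊕ Fin 2) → F),
      Module.finrank F C = 3 ∧
      IsLeast {w : ℕ | ∃ c ∈ C, c ≠ 0 ∧ hammingNorm c = w} (Fintype.card F) := by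
  have hinj : Function.Injective (phi (F := F)) := by
    rw [injective_iff_map_eq_zero]
    intro v hv
    have h0 : v 0 = 0 := by rw [← phi_inr0 v, hv]; rfl
    have h1 : v 1 = 0 := by rw [← phi_inr1 v, hv]; rfl
    have h2 : v 2 = 0 := by
      have := phi_inl v 0
      rw [hv] at this; simpa using this.symm
    funext i; fin_cases i <;> assumption
  refine ⟨LinearMap.range phi, ?_, ?_, ?_⟩
  · rw [LinearMap.finrank_range_of_inj hinj]
    simp [Module.finrank_pi]
  · -- membership: weight of phi ![0,1,0] is card F
    refine ⟨phi ![0, 1, 0], LinearMap.mem_range_self _ _, ?_, ?_⟩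
    · intro h
      have := phi_inr1 (F := F) ![0, 1, 0]
      rw [h] at this
      simp at this
    · rw [hn_eq]
      have hz : (Finset.univ.filter (fun i => phi (F := F) ![0, 1, 0] i = 0))
          = {Sum.inl 0, Sum.inr 0} := by
        ext i
        simp only [Finset.mem_filter, Finset.mem_univ, true_and, Finset.mem_insert,
          Finset.mem_singleton]
        rcases i with x | j
        · rw [phi_inl]; simp
        · fin_cases j
          · simp [phi_inr0]
          · simp [phi_inr1]
      rw [hz]
      rw [Finset.card_insert_of_notMem (by simp), Finset.card_singleton]
      omega
  · rintro w ⟨c, hc, hne, rfl⟩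
    obtain ⟨v, rfl⟩ := hc
    have hv : v ≠ 0 := fun h => hne (by rw [h, map_zero])
    have := zeros_le v hv
    rw [hn_eq]
    omega

end Hyperoval

/-- Existence of hyperoval (triply-extended Reed–Solomon) codes: over a finite
field `F` with `2 ^ r` elements (`r ≥ 1`) there exists an MDS linear code with
parameters `[2 ^ r + 2, 3, 2 ^ r]`. -/
theorem exists_hyperoval_code
    {F : Type*} [Field F] [Fintype F] [DecidableEq F] (r : ℕ) (hr : 1 ≤ r)
    (hq : Fintype.card F = 2 ^ r) :
    ∃ C : Submodule F (Fin (2 ^ r + 2) → F),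
      Module.finrank F C = 3 ∧
      IsLeast {w : ℕ | ∃ c ∈ C, c ≠ 0 ∧ hammingNorm c = w} (2 ^ r) := by
  classical
  haveI hchar : CharP F 2 := by
    obtain ⟨p, hp⟩ := CharP.exists F
    haveI := hp
    obtain ⟨n, hpn, hcard⟩ := FiniteField.card F p
    have hpow : p ^ (n : ℕ) = 2 ^ r := by rw [← hcard, hq]
    have hdvd : p ∣ 2 ^ r := hpow ▸ dvd_pow_self p n.pos.ne'
    have hp2 : p = 2 :=
      (Nat.prime_dvd_prime_iff_eq hpn Nat.prime_two).mp (hpn.dvd_of_dvd_pow hdvd)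
    rwa [hp2] at hp
  obtain ⟨C, hC3, hmem, hlb⟩ := hyperoval_aux (F := F)
  have e : Fin (2 ^ r + 2) ≃ (F ⊕ Fin 2) :=
    Fintype.equivOfCardEq (by simp [hq])
  let L : ((F ⊕ Fin 2) → F) ≃ₗ[F] (Fin (2 ^ r + 2) → F) :=
    LinearEquiv.funCongrLeft F F e
  have hL : ∀ v : (F ⊕ Fin 2) → F, L v = v ∘ e := fun _ => rfl
  refine ⟨C.map (L : _ →ₗ[F] _), ?_, ?_, ?_⟩
  · rw [LinearEquiv.finrank_map_eq]; exact hC3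
  · obtain ⟨c, hc, hne, hw⟩ := hmem
    refine ⟨L c, Submodule.mem_map_of_mem hc, ?_, ?_⟩
    · simpa using (LinearEquiv.map_ne_zero_iff L).2 hne
    · rw [hL, hn_comp_equiv, hw, hq]
  · rintro w ⟨c', hm, hne, rfl⟩
    obtain ⟨c, hc, rfl⟩ := Submodule.mem_map.mp hm
    have hne' : c ≠ 0 := fun h => hne (by rw [h]; simp)
    have h1 : ((L : ((F ⊕ Fin 2) → F) →ₗ[F] (Fin (2 ^ r + 2) → F)) c) = c ∘ e := rfl
    rw [h1, hn_comp_equiv e c, ← hq]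
    exact hlb ⟨c, hc, hne', rfl⟩
end

section
/- Subfield code bounds (Lemma 5.2): let F ⊆ K be finite fields with [K : F] = r, and let C be a linear code of length ℓ over K with dimension k = finrank K C and minimum distance d. Let C* = C ∩ Fᵉˡˡ = {c ∈ C : ∀ i, c i ∈ F} be the subfield code, regarded as an F-linear code of length ℓ with dimension k* = finrank F C* and (when C* ≠ 0) minimum distance d*. Then: (i) d* ≥ d (every nonzero codeword of C* has Hamming weight at least d); and (ii) ℓ − k ≤ ℓ − k* ≤ r(ℓ − k), i.e. k* ≤ k and k* ≥ ℓ − r(ℓ − k). -/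
open Module

/-- The subfield code `C* = C|_F` of a `K`-linear code `C` of length `ℓ`:
the `F`-subspace of codewords of `C` all of whose coordinates lie in (the image
of) the subfield `F`. -/
def subfieldCode {F K : Type*} [Field F] [Field K] [Algebra F K] {ℓ : ℕ}
    (C : Submodule K (Fin ℓ → K)) : Submodule F (Fin ℓ → K) :=
  C.restrictScalars F ⊓
    Submodule.pi Set.univ (fun _ : Fin ℓ => LinearMap.range (Algebra.linearMap F K))

/-- F-linearly independent families of vectors with coordinates in `F`
remain linearly independent over `K`. -/
theorem aux_li {F K : Type*} [Field F] [Field K] [Algebra F K] {n : ℕ}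
    {ι : Type*} {v : ι → (Fin n → F)} (hv : LinearIndependent F v) :
    LinearIndependent K (fun i => (algebraMap F K) ∘ v i) := by
  classical
  rw [linearIndependent_iff'] at hv ⊢
  intro s g hg i hi
  let b := Basis.ofVectorSpace F K
  have key : ∀ j, ∀ i ∈ s, b.repr (g i) j = 0 := by
    intro j
    refine hv s (fun i => b.repr (g i) j) ?_
    funext t
    have ht2 : ∑ i ∈ s, (v i t) • g i = 0 := by
      have ht := congrFun hg t
      simp only [Finset.sum_apply, Pi.smul_apply, Function.comp_apply, Pi.zero_apply,
        smul_eq_mul] at ht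
      simpa [Algebra.smul_def, mul_comm] using ht
    have h3 := congrArg (fun x => b.repr x j) ht2
    simp only [map_sum, map_smul, Finset.sum_apply', Finsupp.smul_apply, smul_eq_mul,
      map_zero, Finsupp.coe_zero, Pi.zero_apply] at h3
    simpa [Finset.sum_apply, mul_comm] using h3
  exact b.ext_elem fun j => by simp [key j i hi]

/-- Subfield code bounds (Lemma 5.2): if `C` is a `[ℓ, k, d]` linear code over `K`
and `F ⊆ K` with `[K : F] = r`, then the subfield code `C* = C|_F` has
(i) every nonzero codeword of Hamming weight at least `d` (so `d* ≥ d`), and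
(ii) dimension `k*` with `k* ≤ k` and `ℓ - r * (ℓ - k) ≤ k*`
(i.e. `ℓ - k ≤ ℓ - k* ≤ r * (ℓ - k)`). -/
theorem subfield_code_bounds
    {F K : Type*} [Field F] [Fintype F] [Field K] [Fintype K] [DecidableEq K]
    [Algebra F K] {ℓ r k d : ℕ} (hr : Module.finrank F K = r)
    (C : Submodule K (Fin ℓ → K)) (hk : Module.finrank K C = k)
    (hd : IsLeast {w : ℕ | ∃ c ∈ C, c ≠ 0 ∧ hammingNorm c = w} d) :
    (∀ c ∈ subfieldCode (F := F) C, c ≠ 0 → d ≤ hammingNorm c) ∧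
    Module.finrank F (subfieldCode (F := F) C) ≤ k ∧
    ℓ - r * (ℓ - k) ≤ Module.finrank F (subfieldCode (F := F) C) := by
  classical
  have hFK : Module.Finite F (Fin ℓ → K) := Module.Finite.of_finite
  have hKK : Module.Finite K (Fin ℓ → K) := inferInstance
  -- the embedding Φ : Fⁿ →ₗ[F] Kⁿ
  let Φ : (Fin ℓ → F) →ₗ[F] (Fin ℓ → K) :=
    LinearMap.pi (fun t => (Algebra.linearMap F K).comp (LinearMap.proj t))
  have hΦ : Function.Injective Φ := by
    intro f g hfg
    funext t
    have := congrFun hfg t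
    simpa [Φ] using (algebraMap F K).injective (by simpa [Φ] using this)
  set B : Submodule F (Fin ℓ → K) :=
    Submodule.pi Set.univ (fun _ : Fin ℓ => LinearMap.range (Algebra.linearMap F K)) with hBdef
  have hBrange : B = LinearMap.range Φ := by
    ext x
    simp only [hBdef, Submodule.mem_pi, Set.mem_univ, forall_true_left, LinearMap.mem_range]
    constructor
    · intro h
      choose f hf using h
      exact ⟨f, funext fun t => hf t⟩
    · rintro ⟨f, rfl⟩ t
      exact ⟨f t, rfl⟩
  refine ⟨?_, ?_, ?_⟩
  · intro c hc hc0
    exact hd.2 ⟨c, hc.1, hc0, rfl⟩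
  · -- upper bound on k*
    set m := Module.finrank F (subfieldCode (F := F) C) with hm
    let b := Module.finBasis F ↥(subfieldCode (F := F) C)
    let c : Fin m → (Fin ℓ → K) := fun i => ((b i : ↥(subfieldCode (F := F) C)) : Fin ℓ → K)
    have hcC : ∀ i, c i ∈ C := fun i => (b i).2.1
    have hrange : ∀ i t, ∃ a : F, algebraMap F K a = c i t := by
      intro i t
      exact (b i).2.2 t (Set.mem_univ t)
    choose w hw using hrange
    have hcli : LinearIndependent F c :=
      b.linearIndependent.map' (subfieldCode (F := F) C).subtype
        (Submodule.ker_subtype _)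
    have hwc : ∀ i, (algebraMap F K) ∘ w i = c i := fun i => funext fun t => hw i t
    have hΦw : Φ ∘ w = c := by
      funext i
      rw [← hwc i]
      rfl
    have hwli : LinearIndependent F w := LinearIndependent.of_comp Φ (by rw [hΦw]; exact hcli)
    have hKli : LinearIndependent K c := by
      have := aux_li (K := K) hwli
      simpa [hwc] using this
    let cc : Fin m → ↥C := fun i => ⟨c i, hcC i⟩
    have hccli : LinearIndependent K cc := by
      apply LinearIndependent.of_comp C.subtype
      have : C.subtype ∘ cc = c := rfl
      rw [this]; exact hKli
    have := hccli.fintype_card_le_finrank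
    simpa [hk] using this
  · -- lower bound on k*
    have hA : Module.finrank F ↥(C.restrictScalars F) = r * k := by
      have h1 := Module.finrank_mul_finrank F K ↥C
      rw [hr, hk] at h1
      rw [LinearEquiv.finrank_eq ((Submodule.restrictScalarsEquiv F K _ C).restrictScalars F)]
      exact h1.symm
    have hB2 : Module.finrank F ↥B = ℓ := by
      rw [hBrange, LinearMap.finrank_range_of_inj hΦ]
      simp [Module.finrank_pi]
    have hwhole : Module.finrank F (Fin ℓ → K) = ℓ * r := by
      rw [Module.finrank_pi_fintype]
      simp [hr, Finset.sum_const]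
    have hkl : k ≤ ℓ := by
      rw [← hk]
      have := Submodule.finrank_le C
      simpa [Module.finrank_pi] using this
    have hsum := Submodule.finrank_sup_add_finrank_inf_eq (C.restrictScalars F) B
    rw [hA, hB2] at hsum
    have hsup : Module.finrank F ↥(C.restrictScalars F ⊔ B) ≤ ℓ * r := by
      rw [← hwhole]
      exact Submodule.finrank_le _
    have hmul : r * (ℓ - k) + r * k = ℓ * r := by
      rw [← Nat.mul_add, Nat.sub_add_cancel hkl, Nat.mul_comm]
    have hgoal : Module.finrank F ↥(subfieldCode (F := F) C)
        = Module.finrank F ↥(C.restrictScalars F ⊓ B) := rfl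
    rw [hgoal]
    omega
end

section
/- Burst-erasure recovery with Reed–Solomon symbols (combinatorial core of Corollary 5.6): let r, γ, n, t, m be natural numbers with t ≤ n, m = n − t, r ≥ 1, 2 ≤ γ, and r > γ − 2 (i.e. γ ≤ r + 1). Group bit positions into blocks of size r, position x belonging to block ⌊x/r⌋. Let E ⊆ ℕ be a union of m intervals of consecutive positions, each of length at most γ. Then the set of blocks met by E has cardinality at most 2·m. Consequently, if C is a linear code of length ℓ over a field K with minimum distance d ≥ 2·(n − t) + 1, and c, c' ∈ C are codewords such that every block index j with c j ≠ c' j lies in the set of blocks met by E, then c = c'. -/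
/-- Burst-erasure recovery with Reed–Solomon symbols (combinatorial core of
Corollary 5.6): grouping bit positions into blocks of size `r` (position `x`
lies in block `x / r`), a union `E` of `m = n - t` bursts of length at most
`γ ≤ r + 1` meets at most `2 * m` blocks.  Consequently, a code of minimum
distance `d ≥ 2 * (n - t) + 1` recovers the codeword: two codewords that can
only differ at block indices met by `E` are equal. -/
theorem burst_erasure_recovery
    {K : Type*} [Field K] [DecidableEq K]
    (r γ n t m ℓ d : ℕ) (htn : t ≤ n) (hm : m = n - t)
    (hr : 1 ≤ r) (hγ : 2 ≤ γ) (hrγ : γ - 2 < r)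
    (a len : Fin m → ℕ) (hlen : ∀ i, len i ≤ γ)
    (E : Finset ℕ)
    (hE : E = Finset.univ.biUnion fun i => Finset.Ico (a i) (a i + len i)) :
    (E.image (· / r)).card ≤ 2 * m ∧
    ∀ C : Submodule K (Fin ℓ → K),
      IsLeast {w : ℕ | ∃ c ∈ C, c ≠ 0 ∧ hammingNorm c = w} d →
      2 * (n - t) + 1 ≤ d →
      ∀ c ∈ C, ∀ c' ∈ C,
        (∀ j : Fin ℓ, c j ≠ c' j → (j : ℕ) ∈ E.image (· / r)) →
        c = c' := by
  have hcard : (E.image (· / r)).card ≤ 2 * m := by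
    subst hE
    rw [Finset.biUnion_image]
    refine le_trans (Finset.card_biUnion_le) ?_
    have key : ∀ i : Fin m, ((Finset.Ico (a i) (a i + len i)).image (· / r)).card ≤ 2 := fun i => ?_
    calc (∑ i : Fin m, ((Finset.Ico (a i) (a i + len i)).image (· / r)).card)
        ≤ ∑ _i : Fin m, 2 := Finset.sum_le_sum fun i _ => key i
      _ = 2 * m := by simp [Finset.sum_const, Finset.card_univ, mul_comm]
    have hsub : (Finset.Ico (a i) (a i + len i)).image (· / r) ⊆
        Finset.Icc (a i / r) (a i / r + 1) := by
      intro b hb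
      simp only [Finset.mem_image, Finset.mem_Ico] at hb
      obtain ⟨x, ⟨hx1, hx2⟩, rfl⟩ := hb
      simp only [Finset.mem_Icc]
      constructor
      · exact Nat.div_le_div_right hx1
      · have hxr : x ≤ a i + r := by
          have hli := hlen i
          omega
        calc x / r ≤ (a i + r) / r := Nat.div_le_div_right hxr
          _ = a i / r + 1 := by rw [Nat.add_div_right _ (by omega)]
    calc ((Finset.Ico (a i) (a i + len i)).image (· / r)).card
        ≤ (Finset.Icc (a i / r) (a i / r + 1)).card := Finset.card_le_card hsub
      _ ≤ 2 := by rw [Nat.card_Icc]; omega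
  refine ⟨hcard, fun C hleast hd c hc c' hc' hdiff => ?_⟩
  by_contra hne
  have hv : c - c' ∈ C := C.sub_mem hc hc'
  have hv0 : c - c' ≠ 0 := sub_ne_zero.mpr hne
  have hdle : d ≤ hammingNorm (c - c') := hleast.2 ⟨c - c', hv, hv0, rfl⟩
  have hnorm : hammingNorm (c - c') ≤ (E.image (· / r)).card := by
    unfold hammingNorm
    have : (Finset.univ.filter fun i => (c - c') i ≠ 0).image (Fin.val) ⊆
        E.image (· / r) := by
      intro b hb
      simp only [Finset.mem_image, Finset.mem_filter] at hb
      obtain ⟨j, ⟨_, hj⟩, rfl⟩ := hb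
      exact hdiff j (fun h => hj (by simp [Pi.sub_apply, h]))
    calc (Finset.univ.filter fun i => (c - c') i ≠ 0).card
        = ((Finset.univ.filter fun i => (c - c') i ≠ 0).image Fin.val).card :=
          (Finset.card_image_of_injective _ Fin.val_injective).symm
      _ ≤ (E.image (· / r)).card := Finset.card_le_card this
  omega
end
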